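/- For all positive integers n and r with r >= 2, (2n + 4r - 5)!! / r! <= n! * (r-2)! * 2^(2n + 6r - 6), i.e., (2n + 4r - 5)!! <= n! * r! * (r-2)! * 2^(2n + 6r - 6). -/

import Mathlib

/-- The double factorial `(2k-1)!! = 1 * 3 * 5 * ... * (2k-1)`. -/
def oddFactorial (k : ℕ) : ℕ := ∏ i ∈ Finset.range k, (2 * i + 1)

lemma oddFactorial_le (k : ℕ) : oddFactorial k ≤ 2 ^ k * Nat.factorial k := by
  induction k with
  | zero => simp [oddFactorial]
  | succ k ih =>
    rw [oddFactorial, Finset.prod_range_succ, ← oddFactorial]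
    calc oddFactorial k * (2 * k + 1) ≤ (2 ^ k * Nat.factorial k) * (2 * (k + 1)) :=
          Nat.mul_le_mul ih (by omega)
      _ = 2 ^ (k + 1) * Nat.factorial (k + 1) := by
          rw [Nat.factorial_succ]; ring

lemma choose_le (a b : ℕ) : Nat.choose (a + b) a ≤ 2 ^ (a + b) := by
  rw [← Nat.sum_range_choose (a + b)]
  exact Finset.single_le_sum (f := fun m => (a + b).choose m) (fun _ _ => Nat.zero_le _)
    (Finset.mem_range.mpr (by omega))

lemma fact_add_le (a b : ℕ) :
    Nat.factorial (a + b) ≤ Nat.factorial a * Nat.factorial b * 2 ^ (a + b) := by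
  have h := Nat.choose_mul_factorial_mul_factorial (Nat.le_add_right a b)
  rw [Nat.add_sub_cancel_left] at h
  calc Nat.factorial (a + b) = Nat.choose (a + b) a * Nat.factorial a * Nat.factorial b := h.symm
    _ ≤ 2 ^ (a + b) * Nat.factorial a * Nat.factorial b := by
        exact Nat.mul_le_mul (Nat.mul_le_mul_right _ (choose_le a b)) le_rfl
    _ = Nat.factorial a * Nat.factorial b * 2 ^ (a + b) := by ring

/-- `(2n+4r-5)!! ≤ n! * r! * (r-2)! * 2^(2n+6r-6)`;
note `(2n+4r-5)!! = oddFactorial (n + 2r - 2)`. -/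
theorem stmt_16 (n r : ℕ) (hn : 1 ≤ n) (hr : 2 ≤ r) :
    oddFactorial (n + 2 * r - 2)
      ≤ Nat.factorial n * Nat.factorial r * Nat.factorial (r - 2)
          * 2 ^ (2 * n + 6 * r - 6) := by
  obtain ⟨s, rfl⟩ : ∃ s, r = 2 + s := ⟨r - 2, by omega⟩
  have e1 : n + 2 * (2 + s) - 2 = n + (2 + 2 * s) := by omega
  have e2 : 2 + s - 2 = s := by omega
  have e3 : 2 * n + 6 * (2 + s) - 6 = 2 * n + 6 * s + 6 := by omega
  rw [e1, e2, e3]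
  calc oddFactorial (n + (2 + 2 * s))
      ≤ 2 ^ (n + (2 + 2 * s)) * Nat.factorial (n + (2 + 2 * s)) := oddFactorial_le _
    _ ≤ 2 ^ (n + (2 + 2 * s)) *
        (Nat.factorial n * Nat.factorial (2 + 2 * s) * 2 ^ (n + (2 + 2 * s))) :=
        Nat.mul_le_mul_left _ (fact_add_le n (2 + 2 * s))
    _ ≤ 2 ^ (n + (2 + 2 * s)) *
        (Nat.factorial n * (Nat.factorial (2 + s) * Nat.factorial s * 2 ^ (2 + 2 * s)) *
          2 ^ (n + (2 + 2 * s))) := by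
        have : Nat.factorial (2 + 2 * s) ≤
            Nat.factorial (2 + s) * Nat.factorial s * 2 ^ (2 + 2 * s) := by
          have := fact_add_le (2 + s) s
          have e : 2 + s + s = 2 + 2 * s := by omega
          rwa [e] at this
        exact Nat.mul_le_mul_left _ (Nat.mul_le_mul_right _ (Nat.mul_le_mul_left _ this))
    _ = Nat.factorial n * Nat.factorial (2 + s) * Nat.factorial s * 2 ^ (2 * n + 6 * s + 6) := by
        rw [show 2 * n + 6 * s + 6 = (n + (2 + 2 * s)) + (2 + 2 * s) + (n + (2 + 2 * s)) by omega,
          pow_add, pow_add]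
        ring
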